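/- arXiv:1306.3910 — 6 statements merged into one kernel-verified Lean document; each statement's English description precedes it below -/
import Mathlib

section
/- Fix a natural number d ≥ 2 and a real r > √(d/(2d+2)). Let X be a subset of the sphere of radius r centered at the origin in Euclidean d-space (i.e., ‖x‖ = r for all x ∈ X) with all pairwise distances at most 1. Then X lies in an open hemisphere: there exists a nonzero vector u ∈ ℝᵈ such that ⟨u, x⟩ > 0 for every x ∈ X. -/
/-!
By Carathéodory, a point `y` of the convex hull of `X` is a convex combination `∑ wᵢ • zᵢ` of at
most `d + 1` points of `X`. As the `zᵢ` lie on the sphere of radius `r`,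
`‖y‖² = r² - ½ ∑ᵢⱼ wᵢ wⱼ ‖zᵢ - zⱼ‖² ≥ r² - ½ (1 - ∑ wᵢ²)`, and `∑ wᵢ² ≥ 1 / (d + 1)` by
Cauchy–Schwarz, so `‖y‖² ≥ r² - d / (2d + 2) > 0`. Hence `0` lies outside the closed convex hull
of `X`, and a hyperplane separating `0` from it bounds the required open hemisphere.
-/

open scoped RealInnerProductSpace

open Finset Module

lemma sum_sum_mul_norm_sub_sq_le {E ι : Type*} [SeminormedAddCommGroup E] [Fintype ι]
    {z : ι → E} {w : ι → ℝ} (hw₀ : ∀ i, 0 ≤ w i) (hw : ∑ i, w i = 1)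
    (hz : ∀ i j, ‖z i - z j‖ ≤ 1) :
    ∑ i, ∑ j, w i * w j * ‖z i - z j‖ ^ 2 ≤ 1 - ∑ i, w i ^ 2 := by
  classical
  have hterm : ∀ i j, w i * w j * ‖z i - z j‖ ^ 2 ≤ w i * w j - if i = j then w i ^ 2 else 0 := by
    intro i j
    split_ifs with hij
    · simp [hij, sq]
    · have : ‖z i - z j‖ ^ 2 ≤ 1 := pow_le_one₀ (norm_nonneg _) (hz i j)
      simpa using mul_le_mul_of_nonneg_left this (mul_nonneg (hw₀ i) (hw₀ j))
  calc ∑ i, ∑ j, w i * w j * ‖z i - z j‖ ^ 2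
      ≤ ∑ i, ∑ j, (w i * w j - if i = j then w i ^ 2 else 0) :=
        sum_le_sum fun i _ => sum_le_sum fun j _ => hterm i j
    _ = (∑ i, w i) * (∑ j, w j) - ∑ i, w i ^ 2 := by
        simp [sum_sub_distrib, sum_mul_sum]
    _ = 1 - ∑ i, w i ^ 2 := by rw [hw]; ring

section

variable {E : Type*} [NormedAddCommGroup E] [InnerProductSpace ℝ E]

lemma norm_sq_sum_smul_of_norm_eq {ι : Type*} [Fintype ι] {z : ι → E} {w : ι → ℝ} {r : ℝ}
    (hz : ∀ i, ‖z i‖ = r) (hw : ∑ i, w i = 1) :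
    ‖∑ i, w i • z i‖ ^ 2 = r ^ 2 - (∑ i, ∑ j, w i * w j * ‖z i - z j‖ ^ 2) / 2 := by
  have hinner : ∀ i j, ⟪z i, z j⟫ = r ^ 2 - ‖z i - z j‖ ^ 2 / 2 := fun i j => by
    rw [norm_sub_sq_real, hz i, hz j]; ring
  calc ‖∑ i, w i • z i‖ ^ 2 = ∑ i, ∑ j, w i * w j * ⟪z i, z j⟫ := by
        simp_rw [← real_inner_self_eq_norm_sq, sum_inner, inner_sum, real_inner_smul_left,
          real_inner_smul_right, mul_assoc]
    _ = (∑ i, w i) * (∑ j, w j) * r ^ 2 - (∑ i, ∑ j, w i * w j * ‖z i - z j‖ ^ 2) / 2 := by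
        rw [sum_mul_sum, sum_mul, sum_div, ← sum_sub_distrib]
        refine sum_congr rfl fun i _ => ?_
        rw [sum_mul, sum_div, ← sum_sub_distrib]
        refine sum_congr rfl fun j _ => ?_
        rw [hinner]; ring
    _ = _ := by rw [hw]; ring

lemma sq_sub_le_norm_sq_of_mem_convexHull [FiniteDimensional ℝ E] {X : Set E} {r : ℝ}
    (hX : ∀ x ∈ X, ‖x‖ = r) (hdiam : ∀ x ∈ X, ∀ y ∈ X, ‖x - y‖ ≤ 1) {y : E}
    (hy : y ∈ convexHull ℝ X) :
    r ^ 2 - finrank ℝ E / (2 * finrank ℝ E + 2) ≤ ‖y‖ ^ 2 := by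
  obtain ⟨ι, _, z, w, hzX, hz_indep, hw₀, hw, rfl⟩ := eq_pos_convex_span_of_mem_convexHull hy
  have hzX' : ∀ i, z i ∈ X := fun i => hzX ⟨i, rfl⟩
  have hcard : (Fintype.card ι : ℝ) ≤ finrank ℝ E + 1 := by
    exact_mod_cast hz_indep.card_le_finrank_succ.trans
      (Nat.add_le_add_right (Submodule.finrank_le _) 1)
  have hsq : 1 ≤ Fintype.card ι * ∑ i, w i ^ 2 := by
    simpa [hw] using sq_sum_le_card_mul_sum_sq (s := univ) (f := w)
  have hdist := sum_sum_mul_norm_sub_sq_le (fun i => (hw₀ i).le) hw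
    (fun i j => hdiam _ (hzX' i) _ (hzX' j))
  rw [norm_sq_sum_smul_of_norm_eq (fun i => hX _ (hzX' i)) hw]
  have hw_sq : 1 / (finrank ℝ E + 1 : ℝ) ≤ ∑ i, w i ^ 2 := by
    rw [div_le_iff₀ (by positivity)]
    nlinarith [sum_nonneg fun i (_ : i ∈ univ) => sq_nonneg (w i)]
  have hrank : (finrank ℝ E : ℝ) / (2 * finrank ℝ E + 2) = (1 - 1 / (finrank ℝ E + 1)) / 2 := by
    field_simp
    ring
  rw [hrank]
  linarith

lemma zero_notMem_closure_convexHull [FiniteDimensional ℝ E] {X : Set E} {r : ℝ}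
    (hr : finrank ℝ E / (2 * finrank ℝ E + 2) < r ^ 2) (hX : ∀ x ∈ X, ‖x‖ = r)
    (hdiam : ∀ x ∈ X, ∀ y ∈ X, ‖x - y‖ ≤ 1) :
    (0 : E) ∉ closure (convexHull ℝ X) := by
  intro h0
  have := le_on_closure (fun y hy => sq_sub_le_norm_sq_of_mem_convexHull hX hdiam hy)
    continuousOn_const (by fun_prop) h0
  rw [norm_zero] at this
  linarith

lemma exists_inner_pos_of_zero_notMem_closure_convexHull [CompleteSpace E] {X : Set E}
    (h : (0 : E) ∉ closure (convexHull ℝ X)) : ∃ u : E, ∀ x ∈ X, 0 < ⟪u, x⟫ := by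
  obtain ⟨f, s, hf0, hfs⟩ := geometric_hahn_banach_point_closed (convex_convexHull ℝ X).closure
    isClosed_closure h
  refine ⟨(InnerProductSpace.toDual ℝ E).symm f, fun x hx => ?_⟩
  rw [InnerProductSpace.toDual_symm_apply]
  rw [map_zero] at hf0
  exact hf0.trans (hfs x (subset_closure (subset_convexHull ℝ X hx)))

end

theorem subset_of_sphere_in_open_hemisphere (d : ℕ) (hd : d ≥ 2) (r : ℝ)
    (hr : r > Real.sqrt (d / (2 * d + 2)))
    (X : Set (EuclideanSpace ℝ (Fin d)))
    (hsphere : ∀ x ∈ X, ‖x‖ = r)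
    (hdiam : ∀ x ∈ X, ∀ y ∈ X, ‖x - y‖ ≤ 1) :
    ∃ u : EuclideanSpace ℝ (Fin d), u ≠ 0 ∧ ∀ x ∈ X, ⟪u, x⟫ > 0 := by
  have hE : finrank ℝ (EuclideanSpace ℝ (Fin d)) = d := finrank_euclideanSpace_fin
  rcases X.eq_empty_or_nonempty with rfl | ⟨x₀, hx₀⟩
  · have : Nontrivial (EuclideanSpace ℝ (Fin d)) := nontrivial_of_finrank_pos (R := ℝ) (by omega)
    obtain ⟨u, hu⟩ := exists_ne (0 : EuclideanSpace ℝ (Fin d))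
    exact ⟨u, hu, by simp⟩
  have h0 : (0 : EuclideanSpace ℝ (Fin d)) ∉ closure (convexHull ℝ X) :=
    zero_notMem_closure_convexHull (by rw [hE]; exact Real.lt_sq_of_sqrt_lt hr) hsphere hdiam
  obtain ⟨u, hu⟩ := exists_inner_pos_of_zero_notMem_closure_convexHull h0
  refine ⟨u, ?_, hu⟩
  rintro rfl
  simpa using hu x₀ hx₀
end

section
/- Fix a natural number d ≥ 2 and reals a > 0, b > 0. Let x₁, …, x_k ∈ ℝᵈ be pairwise distinct vectors with ‖xᵢ‖ = a for all i, let λ₁, …, λ_k ≥ 0, and set z = λ₁x₁ + ⋯ + λ_k x_k. Assume ‖z‖ = a and z ≠ xᵢ for every i. Suppose y ∈ ℝᵈ satisfies ‖y − xᵢ‖ ≤ b for each i = 1, …, k and ‖y‖² + a² − b² > 0. Then ‖y − z‖ < b. -/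
/-!
Put `c = (‖y‖² + a² - b²) / 2 > 0`. Each constraint `‖y - xᵢ‖ ≤ b` says `⟪y, xᵢ⟫ ≥ c`.
Since `z ≠ xᵢ` lie on the same sphere, `⟪z, xᵢ⟫ < a²`, and expanding `a² = ⟪z, z⟫` in the `xᵢ`
forces `∑ λᵢ > 1`. Hence `⟪y, z⟫ ≥ (∑ λᵢ) c > c`, which is exactly `‖y - z‖² < b²`.
-/

open RealInnerProductSpace

section

variable {E : Type*} [NormedAddCommGroup E] [InnerProductSpace ℝ E]

theorem real_inner_lt_sq_of_norm_eq_of_ne {u v : E} {a : ℝ} (hu : ‖u‖ = a) (hv : ‖v‖ = a)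
    (huv : u ≠ v) : ⟪u, v⟫ < a ^ 2 := by
  have hdist : 0 < ‖u - v‖ ^ 2 := by
    have := norm_pos_iff.mpr (sub_ne_zero.mpr huv)
    positivity
  have := norm_sub_sq_real u v
  rw [hu, hv] at this
  linarith

theorem le_real_inner_of_norm_sub_le {x y : E} {a b : ℝ} (hx : ‖x‖ = a) (hxy : ‖y - x‖ ≤ b) :
    (‖y‖ ^ 2 + a ^ 2 - b ^ 2) / 2 ≤ ⟪y, x⟫ := by
  have hsq : ‖y - x‖ ^ 2 ≤ b ^ 2 := pow_le_pow_left₀ (norm_nonneg _) hxy 2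
  have := norm_sub_sq_real y x
  rw [hx] at this
  linarith

theorem real_inner_sum_smul {ι : Type*} (s : Finset ι) (y : E) (lam : ι → ℝ) (x : ι → E) :
    ⟪y, ∑ i ∈ s, lam i • x i⟫ = ∑ i ∈ s, lam i * ⟪y, x i⟫ := by
  simp only [inner_sum, real_inner_smul_right]

theorem one_lt_sum_of_norm_sum_smul_eq {ι : Type*} [Fintype ι] {x : ι → E} {lam : ι → ℝ}
    {a : ℝ} (ha : 0 < a) (hx : ∀ i, ‖x i‖ = a) (hlam : ∀ i, 0 ≤ lam i)
    (hz : ‖∑ i, lam i • x i‖ = a) (hne : ∀ i, ∑ j, lam j • x j ≠ x i) :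
    1 < ∑ i, lam i := by
  set z := ∑ i, lam i • x i
  obtain ⟨i₀, -, hi₀⟩ : ∃ i ∈ Finset.univ, lam i • x i ≠ 0 :=
    Finset.exists_ne_zero_of_sum_ne_zero (norm_pos_iff.mp (hz ▸ ha))
  have hpos : 0 < lam i₀ := (hlam i₀).lt_of_ne' (left_ne_zero_of_smul hi₀)
  have hlt : a ^ 2 < (∑ i, lam i) * a ^ 2 :=
    calc a ^ 2 = ⟪z, z⟫ := by rw [real_inner_self_eq_norm_sq, hz]
      _ = ∑ i, lam i * ⟪z, x i⟫ := real_inner_sum_smul _ _ _ _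
      _ < ∑ i, lam i * a ^ 2 := by
        refine Finset.sum_lt_sum (fun i _ => ?_) ⟨i₀, Finset.mem_univ _, ?_⟩
        · exact mul_le_mul_of_nonneg_left
            (real_inner_lt_sq_of_norm_eq_of_ne hz (hx i) (hne i)).le (hlam i)
        · exact mul_lt_mul_of_pos_left (real_inner_lt_sq_of_norm_eq_of_ne hz (hx i₀) (hne i₀)) hpos
      _ = (∑ i, lam i) * a ^ 2 := (Finset.sum_mul _ _ _).symm
  exact lt_of_mul_lt_mul_right (by simpa using hlt) (by positivity)

end

theorem convex_combination_strictly_closer_general (d : ℕ) (a b : ℝ)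
    (ha : a > 0) (hb : b > 0) (k : ℕ) (x : Fin k → EuclideanSpace ℝ (Fin d))
    (hnorm : ∀ i, ‖x i‖ = a)
    (lam : Fin k → ℝ) (hlam : ∀ i, 0 ≤ lam i)
    (z : EuclideanSpace ℝ (Fin d)) (hz : z = ∑ i, lam i • x i)
    (hznorm : ‖z‖ = a) (hzx : ∀ i, z ≠ x i)
    (y : EuclideanSpace ℝ (Fin d))
    (hy : ∀ i, ‖y - x i‖ ≤ b)
    (hpos : ‖y‖ ^ 2 + a ^ 2 - b ^ 2 > 0) :
    ‖y - z‖ < b := by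
  set c := (‖y‖ ^ 2 + a ^ 2 - b ^ 2) / 2 with hc
  subst hz
  have hsum : 1 < ∑ i, lam i := one_lt_sum_of_norm_sum_smul_eq ha hnorm hlam hznorm hzx
  have hyz : c < ⟪y, ∑ i, lam i • x i⟫ :=
    calc c < (∑ i, lam i) * c := lt_mul_of_one_lt_left (by positivity) hsum
      _ = ∑ i, lam i * c := Finset.sum_mul _ _ _
      _ ≤ ∑ i, lam i * ⟪y, x i⟫ := Finset.sum_le_sum fun i _ =>
        mul_le_mul_of_nonneg_left (le_real_inner_of_norm_sub_le (hnorm i) (hy i)) (hlam i)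
      _ = ⟪y, ∑ i, lam i • x i⟫ := (real_inner_sum_smul _ _ _ _).symm
  have hsq : ‖y - ∑ i, lam i • x i‖ ^ 2 < b ^ 2 := by
    rw [norm_sub_sq_real, hznorm]
    linarith
  exact lt_of_pow_lt_pow_left₀ 2 hb.le hsq

theorem convex_combination_strictly_closer (d : ℕ) (hd : d ≥ 2) (a b : ℝ)
    (ha : a > 0) (hb : b > 0) (k : ℕ) (x : Fin k → EuclideanSpace ℝ (Fin d))
    (hinj : Function.Injective x)
    (hnorm : ∀ i, ‖x i‖ = a)
    (lam : Fin k → ℝ) (hlam : ∀ i, 0 ≤ lam i)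
    (z : EuclideanSpace ℝ (Fin d)) (hz : z = ∑ i, lam i • x i)
    (hznorm : ‖z‖ = a) (hzx : ∀ i, z ≠ x i)
    (y : EuclideanSpace ℝ (Fin d))
    (hy : ∀ i, ‖y - x i‖ ≤ b)
    (hpos : ‖y‖ ^ 2 + a ^ 2 - b ^ 2 > 0) :
    ‖y - z‖ < b :=
  convex_combination_strictly_closer_general d a b ha hb k x hnorm lam hlam z hz hznorm hzx y hy
    hpos
end

section
/- Let r > 1/√2 and let X be a finite set of points in Euclidean 4-space, each of norm r, with all pairwise distances at most 1. For v ∈ X let N(v) = {w ∈ X : ‖w − v‖ = 1} and let O_v = (1 − 1/(2r²))·v. Suppose u, v ∈ X with N(v) and N(u) nonempty. Let x ∈ ℝ⁴ satisfy ‖x‖ = r and x − O_v = Σ_{w ∈ N(v)} λ_w (w − O_v) for some nonnegative reals λ_w, and let y ∈ ℝ⁴ satisfy ‖y‖ = r and y − O_u = Σ_{w ∈ N(u)} μ_w (w − O_u) for some nonnegative reals μ_w. Then ‖x − u‖ ≤ 1 and ‖x − y‖ ≤ 1. -/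
attribute [local instance] Classical.propDecidable

/-! With `c = 1 - 1/(2r²)`, the points `y` of the `r`-sphere with `‖y - v‖ = 1` are those with
`⟪y, v⟫ = c r²`; they all lie at the same distance `ρ > 0` from `O_v = c • v`. A point `x` of the
spherical hull satisfies the same linear condition, so `‖x - O_v‖ = ρ = ‖w - O_v‖` for the generators,
and the triangle inequality forces the coefficients to sum to at least `1`. If `z` on the `r`-sphere
is within `1` of all of `N(v)`, then `⟪z, ·⟫ ≥ r² - 1/2` on `N(v)` while `⟪z, O_v⟫ ≤ c r² = r² - 1/2`;
moving from `O_v` by a nonnegative combination of increments with coefficient sum `≥ 1` keeps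
`⟪z, ·⟫ ≥ r² - 1/2`, i.e. `‖z - x‖ ≤ 1`. Apply this to `z = u ∈ X`, and then to the hull of `N(u)`
with `z = x`. -/

open Finset RealInnerProductSpace

theorem one_le_sum_of_eq_sum_smul_of_norm_le {E ι : Type*} [SeminormedAddCommGroup E]
    [NormedSpace ℝ E] {s : Finset ι} {lam : ι → ℝ} {a : E} {b : ι → E}
    (hlam : ∀ i ∈ s, 0 ≤ lam i) (hb : ∀ i ∈ s, ‖b i‖ ≤ ‖a‖) (ha : 0 < ‖a‖)
    (hab : a = ∑ i ∈ s, lam i • b i) :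
    1 ≤ ∑ i ∈ s, lam i := by
  refine one_le_of_le_mul_left₀ ha ?_
  calc ‖a‖ ≤ ∑ i ∈ s, ‖lam i • b i‖ := hab ▸ norm_sum_le _ _
    _ ≤ ∑ i ∈ s, lam i * ‖a‖ := sum_le_sum fun i hi => by
        rw [norm_smul, Real.norm_of_nonneg (hlam i hi)]
        exact mul_le_mul_of_nonneg_left (hb i hi) (hlam i hi)
    _ = ‖a‖ * ∑ i ∈ s, lam i := by rw [← sum_mul, mul_comm]

section InnerProductSpace

variable {E : Type*} [NormedAddCommGroup E] [InnerProductSpace ℝ E]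

theorem inner_eq_of_sub_eq_sum_smul_sub {s : Finset E} {lam : E → ℝ} {o x v : E} {k : ℝ}
    (hx : x - o = ∑ w ∈ s, lam w • (w - o)) (ho : ⟪o, v⟫ = k) (hs : ∀ w ∈ s, ⟪w, v⟫ = k) :
    ⟪x, v⟫ = k := by
  have hxo : ⟪x - o, v⟫ = 0 := by
    rw [hx, sum_inner]
    exact sum_eq_zero fun w hw => by rw [real_inner_smul_left, inner_sub_left, hs w hw, ho]; ring
  rwa [inner_sub_left, ho, sub_eq_zero] at hxo

theorem le_inner_of_sub_eq_sum_smul_sub {s : Finset E} {lam : E → ℝ} {o x z : E} {t : ℝ}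
    (hlam : ∀ w ∈ s, 0 ≤ lam w) (hsum : 1 ≤ ∑ w ∈ s, lam w)
    (hx : x - o = ∑ w ∈ s, lam w • (w - o)) (ho : ⟪z, o⟫ ≤ t) (hs : ∀ w ∈ s, t ≤ ⟪z, w⟫) :
    t ≤ ⟪z, x⟫ := by
  have hzx : ⟪z, x - o⟫ = ∑ w ∈ s, lam w * (⟪z, w⟫ - ⟪z, o⟫) := by
    rw [hx, inner_sum]
    simp only [real_inner_smul_right, inner_sub_right]
  rw [inner_sub_right] at hzx
  calc t = ⟪z, o⟫ + 1 * (t - ⟪z, o⟫) := by ring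
    _ ≤ ⟪z, o⟫ + (∑ w ∈ s, lam w) * (t - ⟪z, o⟫) := by gcongr
    _ ≤ ⟪z, o⟫ + ∑ w ∈ s, lam w * (⟪z, w⟫ - ⟪z, o⟫) := by
        rw [sum_mul]
        gcongr with w hw
        · exact hlam w hw
        · linarith [hs w hw]
    _ = ⟪z, x⟫ := by rw [← hzx]; ring

theorem norm_sub_sq_of_norm_eq {a b : E} {r : ℝ} (ha : ‖a‖ = r) (hb : ‖b‖ = r) :
    ‖a - b‖ ^ 2 = 2 * (r ^ 2 - ⟪a, b⟫) := by
  rw [norm_sub_sq_real, ha, hb]; ring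

theorem inner_eq_of_norm_sub_eq_one {a b : E} {r : ℝ} (ha : ‖a‖ = r) (hb : ‖b‖ = r)
    (h : ‖a - b‖ = 1) : ⟪a, b⟫ = r ^ 2 - 1 / 2 := by
  have := norm_sub_sq_of_norm_eq ha hb
  rw [h] at this
  linarith

theorem norm_sub_le_one_iff_of_norm_eq {a b : E} {r : ℝ} (ha : ‖a‖ = r) (hb : ‖b‖ = r) :
    ‖a - b‖ ≤ 1 ↔ r ^ 2 - 1 / 2 ≤ ⟪a, b⟫ := by
  rw [← sq_le_one_iff₀ (norm_nonneg _), norm_sub_sq_of_norm_eq ha hb]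
  constructor <;> intro h <;> linarith

theorem norm_sub_smul_sq {a v : E} {r c : ℝ} (ha : ‖a‖ = r) (hv : ‖v‖ = r)
    (hav : ⟪a, v⟫ = c * r ^ 2) :
    ‖a - c • v‖ ^ 2 = (1 - c ^ 2) * r ^ 2 := by
  rw [norm_sub_sq_real, real_inner_smul_right, hav, norm_smul, mul_pow, Real.norm_eq_abs, sq_abs,
    ha, hv]
  ring

theorem norm_sub_le_one_of_sub_eq_sum_smul_sub {r : ℝ} (hr : 1 / 2 < r ^ 2) {S : Finset E}
    {v x z : E} {lam : E → ℝ} (hv : ‖v‖ = r) (hS : ∀ w ∈ S, ‖w‖ = r ∧ ‖w - v‖ = 1)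
    (hx : ‖x‖ = r) (hlam : ∀ w ∈ S, 0 ≤ lam w)
    (hxS : x - (1 - 1 / (2 * r ^ 2)) • v =
      ∑ w ∈ S, lam w • (w - (1 - 1 / (2 * r ^ 2)) • v))
    (hz : ‖z‖ = r) (hzS : ∀ w ∈ S, ‖z - w‖ ≤ 1) :
    ‖z - x‖ ≤ 1 := by
  set c := 1 - 1 / (2 * r ^ 2)
  have hcr : c * r ^ 2 = r ^ 2 - 1 / 2 := by
    have : r ≠ 0 := by rintro rfl; norm_num at hr
    simp only [c]; field_simp
  have hc : 0 ≤ c ∧ c < 1 := by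
    constructor <;> nlinarith [show 0 < r ^ 2 by linarith]
  have hSv : ∀ w ∈ S, ⟪w, v⟫ = c * r ^ 2 := fun w hw =>
    hcr ▸ inner_eq_of_norm_sub_eq_one (hS w hw).1 hv (hS w hw).2
  have hxv : ⟪x, v⟫ = c * r ^ 2 := inner_eq_of_sub_eq_sum_smul_sub hxS
    (by rw [real_inner_smul_left, real_inner_self_eq_norm_sq, hv]) hSv
  have hxo : 0 < ‖x - c • v‖ := by
    have := norm_sub_smul_sq hx hv hxv
    refine norm_pos_iff.2 fun h => ?_
    rw [h, norm_zero] at this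
    nlinarith [mul_pos (sub_pos.2 hc.2) (sub_pos.2 hr)]
  have hsum : 1 ≤ ∑ w ∈ S, lam w := by
    refine one_le_sum_of_eq_sum_smul_of_norm_le hlam (fun w hw => ?_) hxo hxS
    refine ((sq_eq_sq₀ (norm_nonneg _) (norm_nonneg _)).1 ?_).le
    rw [norm_sub_smul_sq (hS w hw).1 hv (hSv w hw), norm_sub_smul_sq hx hv hxv]
  have hzo : ⟪z, c • v⟫ ≤ r ^ 2 - 1 / 2 := by
    rw [real_inner_smul_right, ← hcr]
    have := real_inner_le_norm z v
    rw [hz, hv] at this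
    nlinarith
  refine (norm_sub_le_one_iff_of_norm_eq hz hx).2 ?_
  exact le_inner_of_sub_eq_sum_smul_sub hlam hsum hxS hzo fun w hw =>
    (norm_sub_le_one_iff_of_norm_eq hz (hS w hw).1).1 (hzS w hw)

end InnerProductSpace

theorem spherical_hulls_of_neighborhoods_close_general (r : ℝ) (hr : r > 1 / Real.sqrt 2)
    (X : Finset (EuclideanSpace ℝ (Fin 4)))
    (hsphere : ∀ x ∈ X, ‖x‖ = r)
    (hdiam : ∀ x ∈ X, ∀ y ∈ X, ‖x - y‖ ≤ 1)
    (u v : EuclideanSpace ℝ (Fin 4)) (hu : u ∈ X) (hv : v ∈ X)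
    (x y : EuclideanSpace ℝ (Fin 4)) (hx : ‖x‖ = r) (hy : ‖y‖ = r)
    (lam : EuclideanSpace ℝ (Fin 4) → ℝ) (hlam : ∀ w, 0 ≤ lam w)
    (hxhull : x - (1 - 1 / (2 * r ^ 2)) • v =
      ∑ w ∈ X.filter (fun w => ‖w - v‖ = 1), lam w • (w - (1 - 1 / (2 * r ^ 2)) • v))
    (mu : EuclideanSpace ℝ (Fin 4) → ℝ) (hmu : ∀ w, 0 ≤ mu w)
    (hyhull : y - (1 - 1 / (2 * r ^ 2)) • u =
      ∑ w ∈ X.filter (fun w => ‖w - u‖ = 1), mu w • (w - (1 - 1 / (2 * r ^ 2)) • u)) :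
    ‖x - u‖ ≤ 1 ∧ ‖x - y‖ ≤ 1 := by
  have hr2 : 1 / 2 < r ^ 2 := by
    have h := pow_lt_pow_left₀ hr (by positivity) two_ne_zero
    rwa [div_pow, Real.sq_sqrt zero_le_two, one_pow] at h
  have hN : ∀ p ∈ X, ∀ w ∈ X.filter (fun w => ‖w - p‖ = 1), ‖w‖ = r ∧ ‖w - p‖ = 1 :=
    fun p _ w hw => ⟨hsphere w (mem_filter.1 hw).1, (mem_filter.1 hw).2⟩
  have hxX : ∀ z ∈ X, ‖z - x‖ ≤ 1 := fun z hz =>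
    norm_sub_le_one_of_sub_eq_sum_smul_sub hr2 (hsphere v hv) (hN v hv) hx (fun w _ => hlam w)
      hxhull (hsphere z hz) fun w hw => hdiam z hz w (mem_filter.1 hw).1
  refine ⟨norm_sub_rev x u ▸ hxX u hu, ?_⟩
  exact norm_sub_le_one_of_sub_eq_sum_smul_sub hr2 (hsphere u hu) (hN u hu) hy (fun w _ => hmu w)
    hyhull hx fun w hw => norm_sub_rev x w ▸ hxX w (mem_filter.1 hw).1

theorem spherical_hulls_of_neighborhoods_close (r : ℝ) (hr : r > 1 / Real.sqrt 2)
    (X : Finset (EuclideanSpace ℝ (Fin 4)))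
    (hsphere : ∀ x ∈ X, ‖x‖ = r)
    (hdiam : ∀ x ∈ X, ∀ y ∈ X, ‖x - y‖ ≤ 1)
    (u v : EuclideanSpace ℝ (Fin 4)) (hu : u ∈ X) (hv : v ∈ X)
    (hNv : (X.filter (fun w => ‖w - v‖ = 1)).Nonempty)
    (hNu : (X.filter (fun w => ‖w - u‖ = 1)).Nonempty)
    (x y : EuclideanSpace ℝ (Fin 4)) (hx : ‖x‖ = r) (hy : ‖y‖ = r)
    (lam : EuclideanSpace ℝ (Fin 4) → ℝ) (hlam : ∀ w, 0 ≤ lam w)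
    (hxhull : x - (1 - 1 / (2 * r ^ 2)) • v =
      ∑ w ∈ X.filter (fun w => ‖w - v‖ = 1), lam w • (w - (1 - 1 / (2 * r ^ 2)) • v))
    (mu : EuclideanSpace ℝ (Fin 4) → ℝ) (hmu : ∀ w, 0 ≤ mu w)
    (hyhull : y - (1 - 1 / (2 * r ^ 2)) • u =
      ∑ w ∈ X.filter (fun w => ‖w - u‖ = 1), mu w • (w - (1 - 1 / (2 * r ^ 2)) • u)) :
    ‖x - u‖ ≤ 1 ∧ ‖x - y‖ ≤ 1 :=
  spherical_hulls_of_neighborhoods_close_general r hr X hsphere hdiam u v hu hv x y hx hy lam hlam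
    hxhull mu hmu hyhull
end

section
/- Let G be a (simple) graph on n ≥ 52 vertices with e edges, where e ≥ n²/4. Then G contains a complete bipartite subgraph K_{7,3}: there exist disjoint vertex sets A and B with |A| = 7, |B| = 3, and every vertex of A adjacent to every vertex of B. -/
/-!
Count pairs `(v, B)` with `B` a `3`-set of neighbours of `v`. Without a `K_{7,3}` every `3`-set has
at most `6` common neighbours, so `∑ C(deg v, 3) ≤ 6 C(n, 3) ≤ (n - 1)³`. On the other hand
`6 C(d, 3) = y³ - y` for `y = d - 1`, and the power mean inequality `∑ y³ ≥ (∑ y)³ / n²` together with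
`∑ y ≥ 2e - n ≥ n²/2 - n` gives `6 ∑ C(deg v, 3) ≥ n (n - 2)³ / 8 - n²`, which exceeds `6 (n - 1)³`
once `n ≥ 52`.
-/

open Finset

theorem Nat.six_mul_choose_three_add_sub_one (d : ℕ) : 6 * d.choose 3 + (d - 1) = (d - 1) ^ 3 := by
  rcases d with _ | _ | d
  · rfl
  · rfl
  · have h : 6 * (d + 2).choose 3 = (d + 2) * (d + 1) * d := by
      rw [show 6 = Nat.factorial 3 from rfl, ← Nat.descFactorial_eq_factorial_mul_choose]
      simp [Nat.descFactorial]
      ring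
    rw [h, show d + 2 - 1 = d + 1 by omega]
    ring

theorem six_mul_cube_sub_one_lt {x : ℝ} (hx : 52 ≤ x) :
    6 * (x - 1) ^ 3 < (x ^ 2 / 2 - x) ^ 3 / x ^ 2 - x ^ 2 := by
  have hx0 : x ≠ 0 := by positivity
  have hx_nonneg : 0 ≤ x := by linarith
  have hx52 : 0 ≤ x - 52 := by linarith
  rw [show (x ^ 2 / 2 - x) ^ 3 / x ^ 2 = x * (x - 2) ^ 3 / 8 by field_simp; ring]
  nlinarith [mul_nonneg (mul_nonneg hx_nonneg hx52) (sq_nonneg (x - 1)), mul_nonneg hx_nonneg hx52,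
    sq_nonneg (x - 1)]

namespace SimpleGraph

variable {V : Type*} [Fintype V] (G : SimpleGraph V) [DecidableRel G.Adj]

def commonNeighborFinset (B : Finset V) : Finset V := {v | ∀ b ∈ B, G.Adj v b}

@[simp]
theorem mem_commonNeighborFinset {B : Finset V} {v : V} :
    v ∈ G.commonNeighborFinset B ↔ ∀ b ∈ B, G.Adj v b := by
  simp [commonNeighborFinset]

theorem sum_degree_choose_eq_sum_card_commonNeighborFinset [DecidableEq V] (t : ℕ) :
    ∑ v, (G.degree v).choose t = ∑ B ∈ univ.powersetCard t, #(G.commonNeighborFinset B) := by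
  convert sum_card_bipartiteAbove_eq_sum_card_bipartiteBelow (s := univ) (t := univ.powersetCard t)
    fun v B => ∀ b ∈ B, G.Adj v b using 2 with v
  · rw [← card_neighborFinset_eq_degree, ← card_powersetCard]
    congr 1
    ext B
    simp [bipartiteAbove, subset_iff, and_comm]
  · congr 1; ext; simp

theorem exists_completeBipartite_of_le_card_commonNeighborFinset {s : ℕ} {B : Finset V}
    (h : s ≤ #(G.commonNeighborFinset B)) :
    ∃ A, Disjoint A B ∧ #A = s ∧ ∀ a ∈ A, ∀ b ∈ B, G.Adj a b := by
  obtain ⟨A, hA, rfl⟩ := exists_subset_card_eq h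
  have hAdj : ∀ a ∈ A, ∀ b ∈ B, G.Adj a b := fun a ha => G.mem_commonNeighborFinset.1 (hA ha)
  exact ⟨A, Finset.disjoint_left.2 fun a ha haB => G.irrefl (hAdj a ha a haB), rfl, hAdj⟩

theorem sum_degree_choose_le_mul_card_choose [DecidableEq V] {s t : ℕ}
    (hfree : ¬ ∃ A B : Finset V,
      Disjoint A B ∧ #A = s + 1 ∧ #B = t ∧ ∀ a ∈ A, ∀ b ∈ B, G.Adj a b) :
    ∑ v, (G.degree v).choose t ≤ s * (Fintype.card V).choose t := by
  have hB : ∀ B ∈ univ.powersetCard t, #(G.commonNeighborFinset B) ≤ s := by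
    intro B hB
    by_contra! hs
    obtain ⟨A, hAB, hA, hAdj⟩ := G.exists_completeBipartite_of_le_card_commonNeighborFinset hs
    exact hfree ⟨A, B, hAB, hA, (mem_powersetCard.1 hB).2, hAdj⟩
  calc ∑ v, (G.degree v).choose t
      = ∑ B ∈ univ.powersetCard t, #(G.commonNeighborFinset B) :=
        G.sum_degree_choose_eq_sum_card_commonNeighborFinset t
    _ ≤ #(univ.powersetCard t) • s := sum_le_card_nsmul _ _ _ hB
    _ = s * (Fintype.card V).choose t := by rw [card_powersetCard, card_univ, smul_eq_mul, mul_comm]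

theorem two_mul_card_edgeFinset_sub_card_le_sum_degree_pred [DecidableEq V] :
    (2 * #G.edgeFinset - Fintype.card V : ℝ) ≤ ∑ v, ((G.degree v - 1 : ℕ) : ℝ) := by
  calc (2 * #G.edgeFinset - Fintype.card V : ℝ) = ∑ v, ((G.degree v : ℝ) - 1) := by
        rw [sum_sub_distrib, ← Nat.cast_sum, sum_degrees_eq_twice_card_edges]
        simp
    _ ≤ ∑ v, ((G.degree v - 1 : ℕ) : ℝ) :=
        sum_le_sum fun v _ => by rcases G.degree v with _ | d <;> simp

theorem le_six_mul_sum_degree_choose_three [DecidableEq V] :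
    (2 * #G.edgeFinset - Fintype.card V : ℝ) ^ 3 / (Fintype.card V : ℝ) ^ 2 - (Fintype.card V : ℝ) ^ 2
      ≤ 6 * ∑ v, ((G.degree v).choose 3 : ℝ) := by
  set n : ℝ := (Fintype.card V : ℝ)
  -- Truncating `deg v - 1` at `0` keeps `y ≥ 0`, as the power mean needs,
  -- while `6 C(deg v, 3) = y³ - y` still holds at `deg v = 0`.
  set y : V → ℝ := fun v => ((G.degree v - 1 : ℕ) : ℝ)
  have hy_nonneg : ∀ v ∈ univ, 0 ≤ y v := fun v _ => Nat.cast_nonneg _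
  have hy_le : ∑ v, y v ≤ n ^ 2 := by
    calc ∑ v, y v ≤ ∑ _v : V, n := sum_le_sum fun v _ => by
          have := G.degree_lt_card_verts v
          simp only [y, n]
          exact_mod_cast (Nat.sub_le _ 1).trans this.le
      _ = n ^ 2 := by simp [n, sq]
  have hchoose : 6 * ∑ v, ((G.degree v).choose 3 : ℝ) = ∑ v, y v ^ 3 - ∑ v, y v := by
    rw [mul_sum, ← sum_sub_distrib]
    refine sum_congr rfl fun v _ => eq_sub_of_add_eq ?_
    simp only [y]
    exact_mod_cast Nat.six_mul_choose_three_add_sub_one (G.degree v)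
  have hpower_mean : (∑ v, y v) ^ 3 / n ^ 2 ≤ ∑ v, y v ^ 3 := by
    simpa using pow_sum_div_card_le_sum_pow hy_nonneg 2
  have hcube : (2 * #G.edgeFinset - n) ^ 3 ≤ (∑ v, y v) ^ 3 :=
    (Odd.pow_le_pow (by decide)).2 G.two_mul_card_edgeFinset_sub_card_le_sum_degree_pred
  calc (2 * #G.edgeFinset - n) ^ 3 / n ^ 2 - n ^ 2 ≤ (∑ v, y v) ^ 3 / n ^ 2 - ∑ v, y v := by
        gcongr
    _ ≤ 6 * ∑ v, ((G.degree v).choose 3 : ℝ) := by linarith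

end SimpleGraph

theorem contains_K73_of_many_edges {V : Type*} [Fintype V] [DecidableEq V]
    (G : SimpleGraph V) [DecidableRel G.Adj]
    (n : ℕ) (hn : Fintype.card V = n) (hn52 : n ≥ 52)
    (he : (G.edgeFinset.card : ℝ) ≥ (n : ℝ) ^ 2 / 4) :
    ∃ A B : Finset V, Disjoint A B ∧ A.card = 7 ∧ B.card = 3 ∧
      ∀ a ∈ A, ∀ b ∈ B, G.Adj a b := by
  by_contra hfree
  subst hn
  set N := Fintype.card V
  have hupper : ∑ v, ((G.degree v).choose 3 : ℝ) ≤ ((N : ℝ) - 1) ^ 3 := by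
    have hchoose := Nat.six_mul_choose_three_add_sub_one N
    have h : ∑ v, (G.degree v).choose 3 ≤ (N - 1) ^ 3 := by
      have : ∑ v, (G.degree v).choose 3 ≤ 6 * N.choose 3 :=
        G.sum_degree_choose_le_mul_card_choose hfree
      omega
    have h' : ((∑ v, (G.degree v).choose 3 : ℕ) : ℝ) ≤ ((N - 1) ^ 3 : ℕ) := by exact_mod_cast h
    push_cast [Nat.cast_sub (by omega : 1 ≤ N)] at h'
    exact h'
  have hcube : ((N : ℝ) ^ 2 / 2 - N) ^ 3 ≤ (2 * #G.edgeFinset - N : ℝ) ^ 3 :=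
    (Odd.pow_le_pow (by decide)).2 (by linarith)
  have hcube_div := div_le_div_of_nonneg_right hcube (sq_nonneg (N : ℝ))
  linarith [six_mul_cube_sub_one_lt (x := N) (by exact_mod_cast hn52),
    G.le_six_mul_sum_degree_choose_three]
end

section
/- Let r > 1/√3 and let X be a finite subset of a circle of radius r in the Euclidean plane (i.e., there is a point O ∈ ℝ² with ‖x − O‖ = r for all x ∈ X), with all pairwise distances at most 1. Then there is at most one unordered pair {x, y} ⊆ X with ‖x − y‖ = 1. -/
/-!
Move the centre to the origin and put `k = r² - 1/2`: two points of the circle are at distance `1`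
exactly when their inner product is `k`, and at distance at most `1` when it is at least `k`; the
bound `r > 1/√3` reads `r² + 2k > 0`, i.e. a unit chord subtends an angle less than `2π/3`.
Under this bound, a point `x` of the circle within distance `1` of both ends of a unit chord `pq`
lies in the angle spanned by `p` and `q`: the area form `ω p x` has the sign of `ω p q`.
If `pq` and `uv` are unit chords, both positively oriented, then `u` lies in the angle of `pq` and
`p` in the angle of `uv`, so `ω p u = 0`, which forces `u = p`; reversing the orientation gives
`v = q` in the same way.
-/

attribute [local instance] Classical.propDecidable

/-- The set of unordered pairs of points of `X ⊆ ℝ²` at distance exactly `1`. -/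
noncomputable def unitPairs2 (X : Finset (EuclideanSpace ℝ (Fin 2))) :
    Finset (Finset (EuclideanSpace ℝ (Fin 2))) :=
  (X.powersetCard 2).filter (fun s => ∀ x ∈ s, ∀ y ∈ s, x ≠ y → ‖x - y‖ = 1)

open Module RealInnerProductSpace

attribute [local instance] FiniteDimensional.of_fact_finrank_eq_two

variable {V : Type*} [NormedAddCommGroup V] [InnerProductSpace ℝ V]

theorem inner_sub_sub_of_norm_sub_eq {r : ℝ} {O x y : V} (hx : ‖x - O‖ = r) (hy : ‖y - O‖ = r) :
    ⟪x - O, y - O⟫ = r ^ 2 - ‖x - y‖ ^ 2 / 2 := by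
  have := norm_sub_sq_real (x - O) (y - O)
  rw [sub_sub_sub_cancel_right, hx, hy] at this
  linarith

variable [Fact (finrank ℝ V = 2)]

namespace Orientation

variable (o : Orientation ℝ V (Fin 2))

local notation "ω" => o.areaForm

theorem areaForm_mul_areaForm_nonneg_of_inner_le {r k : ℝ} {p q x : V}
    (hp : ‖p‖ = r) (hq : ‖q‖ = r) (hx : ‖x‖ = r) (hpq : ⟪p, q⟫ = k) (hk : 0 < r ^ 2 + 2 * k)
    (hpx : k ≤ ⟪p, x⟫) (hqx : k ≤ ⟪q, x⟫) :
    0 ≤ ω p q * ω p x := by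
  by_contra! hs
  have hx' := o.inner_sq_add_areaForm_sq p x
  have hq' := o.inner_sq_add_areaForm_sq p q
  rw [hp, hx] at hx'
  rw [hp, hq, hpq] at hq'
  have haR : ⟪p, x⟫ ≤ r ^ 2 := by simpa [hp, hx, sq] using real_inner_le_norm p x
  set R := r ^ 2
  set a := ⟪p, x⟫
  set s := ω p q * ω p x
  have hc : R * ⟪q, x⟫ = k * a + s := by
    rw [← hpq, o.inner_mul_inner_add_areaForm_mul_areaForm p q x, hp]
  have hsq : s ^ 2 = (R ^ 2 - k ^ 2) * (R ^ 2 - a ^ 2) := by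
    linear_combination (R ^ 2 - a ^ 2) * hq' + ω p q ^ 2 * hx'
  -- `s < 0` forces `k < 0` and `a < R`; squaring `k (R - a) ≤ s` then yields `R (R + 2k) ≤ 0`.
  have hks : k * (R - a) ≤ s := by nlinarith [mul_le_mul_of_nonneg_left hqx (sq_nonneg r)]
  have haR' : a < R := lt_of_le_of_ne haR (by intro h; rw [h, sub_self, mul_zero] at hks; linarith)
  have hk0 : k < 0 := by nlinarith
  have hs2 : s ^ 2 ≤ (k * (R - a)) ^ 2 := by nlinarith
  have h3 : (R - k) * (R + k) * (R + a) ≤ k ^ 2 * (R - a) := by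
    refine le_of_mul_le_mul_right ?_ (sub_pos.2 haR')
    nlinarith
  have h4 : (R - k) * (R + k) ^ 2 ≤ (R - k) * k ^ 2 := by
    nlinarith [mul_le_mul_of_nonneg_left hpx (by nlinarith : 0 ≤ (R - k) * (R + k))]
  have h5 : (R + k) ^ 2 ≤ k ^ 2 := le_of_mul_le_mul_left h4 (by linarith)
  nlinarith

theorem eq_of_areaForm_eq_zero {r : ℝ} {p x : V} (hp : ‖p‖ = r) (hx : ‖x‖ = r)
    (hω : ω p x = 0) (hpx : -r ^ 2 < ⟪p, x⟫) : x = p := by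
  have hsq := o.inner_sq_add_areaForm_sq p x
  rw [hω, hp, hx] at hsq
  have hinner : ⟪p, x⟫ = r ^ 2 := by
    have : (⟪p, x⟫ - r ^ 2) * (⟪p, x⟫ + r ^ 2) = 0 := by linear_combination hsq
    rcases mul_eq_zero.1 this with h | h <;> linarith
  have : ‖x - p‖ ^ 2 = 0 := by rw [norm_sub_sq_real, hp, hx, real_inner_comm, hinner]; ring
  simpa [sub_eq_zero] using this

theorem eq_of_areaForm_pos_of_inner_eq {r k : ℝ} {p q u v : V}
    (hp : ‖p‖ = r) (hq : ‖q‖ = r) (hu : ‖u‖ = r) (hv : ‖v‖ = r)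
    (hpq : ⟪p, q⟫ = k) (huv : ⟪u, v⟫ = k) (hk : 0 < r ^ 2 + 2 * k)
    (hpu : k ≤ ⟪p, u⟫) (hpv : k ≤ ⟪p, v⟫) (hqu : k ≤ ⟪q, u⟫)
    (hωpq : 0 < ω p q) (hωuv : 0 < ω u v) : u = p := by
  have hup : 0 ≤ ω p u := (mul_nonneg_iff_of_pos_left hωpq).1
    (o.areaForm_mul_areaForm_nonneg_of_inner_le hp hq hu hpq hk hpu hqu)
  have hpu' : 0 ≤ ω u p := (mul_nonneg_iff_of_pos_left hωuv).1
    (o.areaForm_mul_areaForm_nonneg_of_inner_le hu hv hp huv hk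
      (real_inner_comm p u ▸ hpu) (real_inner_comm p v ▸ hpv))
  rw [o.areaForm_swap] at hpu'
  exact o.eq_of_areaForm_eq_zero hp hu (by linarith) (by nlinarith)

end Orientation

theorem eq_and_eq_or_of_inner_eq_of_le_inner {r k : ℝ} {p q u v : V}
    (hp : ‖p‖ = r) (hq : ‖q‖ = r) (hu : ‖u‖ = r) (hv : ‖v‖ = r)
    (hpq : ⟪p, q⟫ = k) (huv : ⟪u, v⟫ = k) (hkr : k < r ^ 2) (hk : 0 < r ^ 2 + 2 * k)
    (hpu : k ≤ ⟪p, u⟫) (hpv : k ≤ ⟪p, v⟫) (hqu : k ≤ ⟪q, u⟫) (hqv : k ≤ ⟪q, v⟫) :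
    u = p ∧ v = q ∨ u = q ∧ v = p := by
  let o : Orientation ℝ V (Fin 2) := (finBasisOfFinrankEq ℝ V Fact.out).orientation
  have hω_pos : ∀ {x y : V}, ‖x‖ = r → ‖y‖ = r → ⟪x, y⟫ = k → ¬ 0 < o.areaForm x y →
      0 < o.areaForm y x := by
    intro x y hx hy hxy hneg
    refine o.areaForm_swap y x ▸ neg_pos.2 (lt_of_le_of_ne (not_lt.1 hneg) fun h => ?_)
    have := o.eq_of_areaForm_eq_zero hx hy h (by nlinarith)
    subst this
    rw [real_inner_self_eq_norm_sq, hx] at hxy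
    linarith
  wlog hωpq : 0 < o.areaForm p q generalizing p q
  · exact (this hq hp (real_inner_comm p q ▸ hpq) hqu hqv hpu hpv (hω_pos hp hq hpq hωpq)).symm
  wlog hωuv : 0 < o.areaForm u v generalizing u v
  · exact (this hv hu (real_inner_comm u v ▸ huv) hpv hpu hqv hqu
      (hω_pos hu hv huv hωuv)).symm.imp And.symm And.symm
  have hωqp : 0 < (-o).areaForm q p := by
    rwa [o.areaForm_neg_orientation, LinearMap.neg_apply, LinearMap.neg_apply, ← o.areaForm_swap]
  have hωvu : 0 < (-o).areaForm v u := by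
    rwa [o.areaForm_neg_orientation, LinearMap.neg_apply, LinearMap.neg_apply, ← o.areaForm_swap]
  exact Or.inl ⟨o.eq_of_areaForm_pos_of_inner_eq hp hq hu hv hpq huv hk hpu hpv hqu hωpq hωuv,
    (-o).eq_of_areaForm_pos_of_inner_eq hq hp hv hu (real_inner_comm p q ▸ hpq)
      (real_inner_comm u v ▸ huv) hk hqv hqu hpv hωqp hωvu⟩

theorem eq_and_eq_or_of_norm_sub_le {r d : ℝ} {O p q u v : V} (hd : 0 < d) (hdr : d ^ 2 < 3 * r ^ 2)
    (hp : ‖p - O‖ = r) (hq : ‖q - O‖ = r) (hu : ‖u - O‖ = r) (hv : ‖v - O‖ = r)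
    (hpq : ‖p - q‖ = d) (huv : ‖u - v‖ = d)
    (hpu : ‖p - u‖ ≤ d) (hpv : ‖p - v‖ ≤ d) (hqu : ‖q - u‖ ≤ d) (hqv : ‖q - v‖ ≤ d) :
    u = p ∧ v = q ∨ u = q ∧ v = p := by
  have hle : ∀ {x y : V}, ‖x - O‖ = r → ‖y - O‖ = r → ‖x - y‖ ≤ d →
      r ^ 2 - d ^ 2 / 2 ≤ ⟪x - O, y - O⟫ := by
    intro x y hx hy hxy
    rw [inner_sub_sub_of_norm_sub_eq hx hy]
    have := pow_le_pow_left₀ (norm_nonneg _) hxy 2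
    linarith
  simpa only [sub_left_inj] using eq_and_eq_or_of_inner_eq_of_le_inner hp hq hu hv
    (by rw [inner_sub_sub_of_norm_sub_eq hp hq, hpq])
    (by rw [inner_sub_sub_of_norm_sub_eq hu hv, huv])
    (by nlinarith) (by linarith) (hle hp hu hpu) (hle hp hv hpv) (hle hq hu hqu) (hle hq hv hqv)

theorem exists_eq_pair_of_mem_unitPairs2 {X : Finset (EuclideanSpace ℝ (Fin 2))}
    {s : Finset (EuclideanSpace ℝ (Fin 2))} (hs : s ∈ unitPairs2 X) :
    ∃ a ∈ X, ∃ b ∈ X, ‖a - b‖ = 1 ∧ s = {a, b} := by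
  obtain ⟨hsX, hunit⟩ := Finset.mem_filter.1 hs
  obtain ⟨hsub, hcard⟩ := Finset.mem_powersetCard.1 hsX
  obtain ⟨a, b, hab, rfl⟩ := Finset.card_eq_two.1 hcard
  exact ⟨a, hsub (by simp), b, hsub (by simp), hunit a (by simp) b (by simp) hab, rfl⟩

theorem at_most_one_diameter_on_large_circle (r : ℝ) (hr : r > 1 / Real.sqrt 3)
    (X : Finset (EuclideanSpace ℝ (Fin 2))) (O : EuclideanSpace ℝ (Fin 2))
    (hcirc : ∀ x ∈ X, ‖x - O‖ = r)
    (hdiam : ∀ x ∈ X, ∀ y ∈ X, ‖x - y‖ ≤ 1) :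
    (unitPairs2 X).card ≤ 1 := by
  have : Fact (finrank ℝ (EuclideanSpace ℝ (Fin 2)) = 2) := ⟨finrank_euclideanSpace_fin⟩
  have hr3 : 1 < r * Real.sqrt 3 := (div_lt_iff₀ (by positivity)).1 hr
  have h3r : 1 ^ 2 < 3 * r ^ 2 := by
    nlinarith [Real.sq_sqrt (show (0 : ℝ) ≤ 3 by norm_num)]
  refine Finset.card_le_one.2 fun s hs t ht => ?_
  obtain ⟨a, ha, b, hb, hab, rfl⟩ := exists_eq_pair_of_mem_unitPairs2 hs
  obtain ⟨c, hc, d, hd, hcd, rfl⟩ := exists_eq_pair_of_mem_unitPairs2 ht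
  rcases eq_and_eq_or_of_norm_sub_le one_pos h3r (hcirc a ha) (hcirc b hb) (hcirc c hc) (hcirc d hd)
    hab hcd (hdiam a ha c hc) (hdiam a ha d hd) (hdiam b hb c hc) (hdiam b hb d hd)
    with ⟨rfl, rfl⟩ | ⟨rfl, rfl⟩
  · rfl
  · exact Finset.pair_comm _ _
end

section
/- For all natural numbers n ≥ 5 and a with 2 ≤ a ≤ n − 2, there exists a set X of n points in Euclidean 4-space with all pairwise distances at most 1 such that the number of 3-element subsets of X with all three pairwise distances equal to 1 is at least n + 2(n − a)·⌊(a − 1)/2⌋. (Such X can be taken to be a Lenz configuration: a points on a circle of radius r₁ and n − a points on a concentric circle of radius r₂ lying in an orthogonal plane, with r₁² + r₂² = 1.) -/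
attribute [local instance] Classical.propDecidable

/-- The set of 3-element subsets of `X` with all three pairwise distances equal to `1`. -/
noncomputable def unitTriangles (X : Finset (EuclideanSpace ℝ (Fin 4))) :
    Finset (Finset (EuclideanSpace ℝ (Fin 4))) :=
  (X.powersetCard 3).filter (fun s => ∀ x ∈ s, ∀ y ∈ s, x ≠ y → ‖x - y‖ = 1)

/-!
Lenz's construction, with `ℝ⁴ = ℂ × ℂ`. In the first plane put the vertices of a regular
`(2e+1)`-gon on the circle of radius `r₁` for which its longest diagonals have length `1`; in the
orthogonal plane put `c` points on an arc of the circle of radius `r₂ = √(1 - r₁²)` whose endpoints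
are at distance `1`. Every vertex is then at distance exactly `1` from every arc point, and no two
points are farther apart than that. Each of the `2e+1` longest diagonals forms a unit triangle with
each arc point, and the endpoint chord of the arc with each vertex, so there are at least
`(2e+1)(c+1)` unit triangles; `2e+1 = max 3 (2⌊(a-1)/2⌋+1)` and `c = n - 2e - 1` give the bound.
-/

open Real Finset

local notation "ℝ⁴" => EuclideanSpace ℝ (Fin 4)

-- `ℝ⁴` as `ℂ × ℂ`, so that the two coordinate planes are orthogonal.
noncomputable def toR4 (z w : ℂ) : ℝ⁴ := !₂[z.re, z.im, w.re, w.im]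

theorem norm_toR4_sub_toR4_sq (z w z' w' : ℂ) :
    ‖toR4 z w - toR4 z' w'‖ ^ 2 = ‖z - z'‖ ^ 2 + ‖w - w'‖ ^ 2 := by
  simp only [EuclideanSpace.norm_sq_eq, Fin.sum_univ_four, toR4, Complex.sq_norm,
    Complex.normSq_apply, WithLp.ofLp_sub, Pi.sub_apply, Complex.sub_re, Complex.sub_im,
    Matrix.cons_val_zero, Matrix.cons_val_one, Matrix.cons_val, Real.norm_eq_abs, sq_abs]
  ring

theorem norm_toR4_sub_toR4_left (z z' : ℂ) : ‖toR4 z 0 - toR4 z' 0‖ = ‖z - z'‖ := by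
  rw [← sq_eq_sq₀ (norm_nonneg _) (norm_nonneg _), norm_toR4_sub_toR4_sq]
  simp

theorem norm_toR4_sub_toR4_right (w w' : ℂ) : ‖toR4 0 w - toR4 0 w'‖ = ‖w - w'‖ := by
  rw [← sq_eq_sq₀ (norm_nonneg _) (norm_nonneg _), norm_toR4_sub_toR4_sq]
  simp

theorem norm_toR4_sub_toR4_eq_one {z w : ℂ} (h : ‖z‖ ^ 2 + ‖w‖ ^ 2 = 1) :
    ‖toR4 z 0 - toR4 0 w‖ = 1 := by
  rw [← sq_eq_sq₀ (norm_nonneg _) zero_le_one, norm_toR4_sub_toR4_sq]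
  simpa using h

theorem toR4_left_injective : Function.Injective fun z : ℂ => toR4 z 0 := by
  intro z z' h
  have := norm_toR4_sub_toR4_left z z'
  simp only at h
  rwa [h, sub_self, norm_zero, eq_comm, norm_eq_zero, sub_eq_zero] at this

theorem toR4_right_injective : Function.Injective fun w : ℂ => toR4 0 w := by
  intro w w' h
  have := norm_toR4_sub_toR4_right w w'
  simp only at h
  rwa [h, sub_self, norm_zero, eq_comm, norm_eq_zero, sub_eq_zero] at this

theorem norm_exp_mul_I_sub_exp_mul_I (α β : ℝ) :
    ‖Complex.exp (α * Complex.I) - Complex.exp (β * Complex.I)‖ = 2 * |sin ((α - β) / 2)| := by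
  have hsplit : Complex.exp (α * Complex.I) - Complex.exp (β * Complex.I)
      = Complex.exp (β * Complex.I) * (Complex.exp (Complex.I * ↑(α - β)) - 1) := by
    rw [mul_sub, ← Complex.exp_add]; push_cast; ring_nf
  rw [hsplit, norm_mul, Complex.norm_exp_ofReal_mul_I, one_mul,
    Complex.norm_exp_I_mul_ofReal_sub_one, norm_mul, Real.norm_eq_abs, Real.norm_eq_abs, abs_two]

theorem sin_pi_mul_div_le (e j : ℕ) (hj : j ≤ 2 * e) :
    sin (π * j / (2 * e + 1)) ≤ sin (π * e / (2 * e + 1)) := by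
  have hb : (0 : ℝ) < 2 * e + 1 := by positivity
  have hmono : ∀ i : ℕ, i ≤ e → sin (π * i / (2 * e + 1)) ≤ sin (π * e / (2 * e + 1)) := by
    intro i hi
    have hi' : (i : ℝ) ≤ e := by exact_mod_cast hi
    apply sin_le_sin_of_le_of_le_pi_div_two
    · have : 0 ≤ π * i / (2 * e + 1) := by positivity
      linarith [pi_pos]
    · rw [div_le_iff₀ hb]; nlinarith [pi_pos]
    · gcongr
  rcases le_or_gt j e with hje | hje
  · exact hmono j hje
  · have hsymm : π * j / (2 * e + 1) = π - π * ((2 * e + 1 - j : ℕ) : ℝ) / (2 * e + 1) := by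
      rw [Nat.cast_sub (by omega)]; push_cast; field_simp; ring
    rw [hsymm, sin_pi_sub]
    exact hmono _ (by omega)

theorem pi_div_three_le_pi_mul_div {e : ℕ} (he : 1 ≤ e) : π / 3 ≤ π * e / (2 * e + 1) := by
  have he' : (1 : ℝ) ≤ e := by exact_mod_cast he
  rw [div_le_div_iff₀ (by norm_num) (by positivity)]
  nlinarith [pi_pos]

theorem pi_mul_div_le_pi_div_two (e : ℕ) : π * e / (2 * e + 1) ≤ π / 2 := by
  rw [div_le_div_iff₀ (by positivity) (by norm_num)]
  nlinarith [pi_pos]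

theorem sin_pi_mul_div_pos {e : ℕ} (he : 1 ≤ e) : 0 < sin (π * e / (2 * e + 1)) :=
  sin_pos_of_pos_of_lt_pi (by positivity) (by linarith [pi_mul_div_le_pi_div_two e, pi_pos])

section Polygon

variable (e : ℕ)

-- The longest diagonals of the regular `(2e+1)`-gon join `k` and `k + e` and subtend the angle
-- `2πe/(2e+1)`; this radius makes them unit.
noncomputable def polygonRadius : ℝ := 1 / (2 * sin (π * e / (2 * e + 1)))

noncomputable def polygonVertex (k : ℕ) : ℂ :=
  polygonRadius e * Complex.exp (2 * π * Complex.I / ↑(2 * e + 1)) ^ k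

theorem polygonVertex_eq_exp (k : ℕ) :
    polygonVertex e k
      = polygonRadius e * Complex.exp (↑(2 * π * k / (2 * e + 1)) * Complex.I) := by
  rw [polygonVertex, ← Complex.exp_nat_mul]
  push_cast
  ring_nf

theorem norm_polygonVertex (k : ℕ) : ‖polygonVertex e k‖ = |polygonRadius e| := by
  rw [polygonVertex_eq_exp, norm_mul, Complex.norm_exp_ofReal_mul_I, mul_one, Complex.norm_real,
    Real.norm_eq_abs]

theorem norm_polygonVertex_sub (k l : ℕ) :
    ‖polygonVertex e k - polygonVertex e l‖
      = 2 * |polygonRadius e| * |sin (π * ((k : ℝ) - l) / (2 * e + 1))| := by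
  rw [polygonVertex_eq_exp, polygonVertex_eq_exp, ← mul_sub, norm_mul, Complex.norm_real,
    Real.norm_eq_abs, norm_exp_mul_I_sub_exp_mul_I]
  ring_nf

variable {e}

theorem three_div_four_le_sin_sq (he : 1 ≤ e) : 3 / 4 ≤ sin (π * e / (2 * e + 1)) ^ 2 := by
  have hmono : sin (π / 3) ≤ sin (π * e / (2 * e + 1)) :=
    sin_le_sin_of_le_of_le_pi_div_two (by linarith [pi_pos]) (pi_mul_div_le_pi_div_two e)
      (pi_div_three_le_pi_mul_div he)
  have h0 : 0 ≤ sin (π / 3) := by rw [sin_pi_div_three]; positivity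
  rw [← sq_sin_pi_div_three]
  gcongr

theorem polygonRadius_pos (he : 1 ≤ e) : 0 < polygonRadius e :=
  one_div_pos.2 (mul_pos two_pos (sin_pi_mul_div_pos he))

theorem two_mul_polygonRadius_mul_sin (he : 1 ≤ e) :
    2 * polygonRadius e * sin (π * e / (2 * e + 1)) = 1 := by
  have := (sin_pi_mul_div_pos he).ne'
  unfold polygonRadius
  field_simp

theorem polygonRadius_sq_le (he : 1 ≤ e) : polygonRadius e ^ 2 ≤ 1 / 3 := by
  have hs := three_div_four_le_sin_sq he
  have h1 := two_mul_polygonRadius_mul_sin he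
  nlinarith [sq_nonneg (polygonRadius e)]

theorem polygonVertex_eq_iff (he : 1 ≤ e) {k l : ℕ} :
    polygonVertex e k = polygonVertex e l ↔ k ≡ l [MOD 2 * e + 1] := by
  have hζ := Complex.isPrimitiveRoot_exp (2 * e + 1) (by omega)
  rw [polygonVertex, polygonVertex, mul_right_inj' (by exact_mod_cast (polygonRadius_pos he).ne'),
    (hζ.isOfFinOrder (by omega)).pow_eq_pow_iff_modEq, ← hζ.eq_orderOf]

theorem norm_polygonVertex_sub_le (he : 1 ≤ e) {k l : ℕ} (hk : k < 2 * e + 1)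
    (hl : l < 2 * e + 1) :
    ‖polygonVertex e k - polygonVertex e l‖ ≤ 1 := by
  wlog hlk : l ≤ k generalizing k l
  · rw [norm_sub_rev]; exact this hl hk (by omega)
  have hsin := sin_pi_mul_div_le e (k - l) (by omega)
  have hj : ((k - l : ℕ) : ℝ) ≤ 2 * e + 1 := by exact_mod_cast (show k - l ≤ 2 * e + 1 by omega)
  have hnonneg : 0 ≤ sin (π * ((k - l : ℕ) : ℝ) / (2 * e + 1)) := by
    apply sin_nonneg_of_nonneg_of_le_pi (by positivity)
    rw [div_le_iff₀ (by positivity)]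
    nlinarith [pi_pos]
  rw [norm_polygonVertex_sub, abs_of_pos (polygonRadius_pos he), ← Nat.cast_sub hlk,
    abs_of_nonneg hnonneg]
  calc 2 * polygonRadius e * sin (π * ((k - l : ℕ) : ℝ) / (2 * e + 1))
      ≤ 2 * polygonRadius e * sin (π * e / (2 * e + 1)) :=
        mul_le_mul_of_nonneg_left hsin (by linarith [polygonRadius_pos he])
    _ = 1 := two_mul_polygonRadius_mul_sin he

theorem norm_polygonVertex_add_sub (he : 1 ≤ e) (k : ℕ) :
    ‖polygonVertex e (k + e) - polygonVertex e k‖ = 1 := by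
  rw [norm_polygonVertex_sub, abs_of_pos (polygonRadius_pos he), Nat.cast_add,
    add_sub_cancel_left, abs_of_pos (sin_pi_mul_div_pos he), two_mul_polygonRadius_mul_sin he]

end Polygon

section Arc

variable {r : ℝ} {c : ℕ}

-- `c` equally spaced angles on the arc of the circle of radius `r` whose chord has length `1`.
noncomputable def arcAngle (r : ℝ) (c j : ℕ) : ℝ := 2 * arcsin (1 / (2 * r)) * j / (c - 1)

noncomputable def arcVertex (r : ℝ) (c j : ℕ) : ℂ := r * Complex.exp (arcAngle r c j * Complex.I)

theorem arcsin_pos_of_half_le (hr : 1 / 2 ≤ r) : 0 < arcsin (1 / (2 * r)) :=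
  arcsin_pos.2 (by positivity)

theorem two_mul_mul_sin_arcsin (hr : 1 / 2 ≤ r) : 2 * r * sin (arcsin (1 / (2 * r))) = 1 := by
  rw [sin_arcsin (by linarith [show 0 < 1 / (2 * r) by positivity])
    (by rw [div_le_one (by positivity)]; linarith)]
  field_simp

theorem arcAngle_mem_Icc (hr : 1 / 2 ≤ r) {j : ℕ} (hj : j < c) :
    arcAngle r c j ∈ Set.Icc 0 (2 * arcsin (1 / (2 * r))) := by
  have hs := arcsin_pos_of_half_le hr
  have hjc : (j : ℝ) ≤ c - 1 := by
    have : ((j + 1 : ℕ) : ℝ) ≤ c := by exact_mod_cast hj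
    push_cast at this; linarith
  have hc0 : (0 : ℝ) ≤ c - 1 := by linarith [Nat.cast_nonneg (α := ℝ) j]
  have hratio : (j : ℝ) / (c - 1) ≤ 1 := div_le_one_of_le₀ hjc hc0
  refine ⟨div_nonneg (by positivity) hc0, ?_⟩
  rw [arcAngle, mul_div_assoc]
  nlinarith

theorem norm_arcVertex (j : ℕ) : ‖arcVertex r c j‖ = |r| := by
  rw [arcVertex, norm_mul, Complex.norm_exp_ofReal_mul_I, mul_one, Complex.norm_real,
    Real.norm_eq_abs]

theorem norm_arcVertex_sub (i j : ℕ) :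
    ‖arcVertex r c i - arcVertex r c j‖
      = 2 * |r| * |sin ((arcAngle r c i - arcAngle r c j) / 2)| := by
  rw [arcVertex, arcVertex, ← mul_sub, norm_mul, Complex.norm_real, Real.norm_eq_abs,
    norm_exp_mul_I_sub_exp_mul_I]
  ring

theorem norm_arcVertex_sub_le (hr : 1 / 2 ≤ r) {i j : ℕ} (hi : i < c) (hj : j < c) :
    ‖arcVertex r c i - arcVertex r c j‖ ≤ 1 := by
  set s := arcsin (1 / (2 * r))
  have hsπ : s ≤ π / 2 := arcsin_le_pi_div_two _
  obtain ⟨hi0, hi1⟩ := arcAngle_mem_Icc hr hi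
  obtain ⟨hj0, hj1⟩ := arcAngle_mem_Icc hr hj
  have habs : |(arcAngle r c i - arcAngle r c j) / 2| ≤ s := by
    rw [abs_le]; constructor <;> linarith
  have hsin : |sin ((arcAngle r c i - arcAngle r c j) / 2)| ≤ sin s := by
    rw [abs_sin_eq_sin_abs_of_abs_le_pi (by linarith [pi_pos])]
    exact sin_le_sin_of_le_of_le_pi_div_two
      (by linarith [abs_nonneg ((arcAngle r c i - arcAngle r c j) / 2), pi_pos]) hsπ habs
  rw [norm_arcVertex_sub, abs_of_pos (by linarith)]
  calc 2 * r * |sin ((arcAngle r c i - arcAngle r c j) / 2)| ≤ 2 * r * sin s :=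
        mul_le_mul_of_nonneg_left hsin (by linarith)
    _ = 1 := two_mul_mul_sin_arcsin hr

theorem norm_arcVertex_last_sub_first (hr : 1 / 2 ≤ r) (hc : 2 ≤ c) :
    ‖arcVertex r c (c - 1) - arcVertex r c 0‖ = 1 := by
  have hc1 : (c : ℝ) - 1 ≠ 0 := by
    have : (2 : ℝ) ≤ c := by exact_mod_cast hc
    linarith
  have hlast : arcAngle r c (c - 1) = 2 * arcsin (1 / (2 * r)) := by
    rw [arcAngle, Nat.cast_sub (by omega), Nat.cast_one, mul_div_assoc, div_self hc1, mul_one]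
  rw [norm_arcVertex_sub, hlast, arcAngle, Nat.cast_zero, mul_zero, zero_div, sub_zero,
    mul_div_cancel_left₀ _ two_ne_zero, abs_of_pos (by linarith),
    abs_of_pos (sin_pos_of_pos_of_lt_pi (arcsin_pos_of_half_le hr)
      (by linarith [arcsin_le_pi_div_two (1 / (2 * r)), pi_pos])),
    two_mul_mul_sin_arcsin hr]

theorem arcVertex_injOn (hr : 1 / 2 ≤ r) (hc : 2 ≤ c) : Set.InjOn (arcVertex r c) (range c) := by
  intro i hi j hj hij
  have hi' := arcAngle_mem_Icc hr (mem_range.1 hi)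
  have hj' := arcAngle_mem_Icc hr (mem_range.1 hj)
  have hsπ := arcsin_le_pi_div_two (1 / (2 * r))
  have hcos : cos (arcAngle r c i) = cos (arcAngle r c j) := by
    have := congrArg Complex.re hij
    simp only [arcVertex, Complex.re_ofReal_mul, Complex.exp_ofReal_mul_I_re] at this
    exact mul_left_cancel₀ (by linarith) this
  have hangle := injOn_cos ⟨hi'.1, by linarith [hi'.2]⟩ ⟨hj'.1, by linarith [hj'.2]⟩ hcos
  have hc1 : (c : ℝ) - 1 ≠ 0 := by
    have : (2 : ℝ) ≤ c := by exact_mod_cast hc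
    linarith
  have hs := (arcsin_pos_of_half_le hr).ne'
  rw [arcAngle, arcAngle, div_left_inj' hc1, mul_right_inj' (mul_ne_zero two_ne_zero hs)] at hangle
  exact_mod_cast hangle

end Arc

noncomputable def unitPairs (Y : Finset ℝ⁴) : Finset (Finset ℝ⁴) :=
  (Y.powersetCard 2).filter (fun s => ∀ x ∈ s, ∀ y ∈ s, x ≠ y → ‖x - y‖ = 1)

theorem pair_mem_unitPairs {Y : Finset ℝ⁴} {u v : ℝ⁴} (hu : u ∈ Y) (hv : v ∈ Y)
    (huv : ‖u - v‖ = 1) : {u, v} ∈ unitPairs Y := by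
  have hne : u ≠ v := by rintro rfl; simp at huv
  simp only [unitPairs, mem_filter, mem_powersetCard, card_pair hne, insert_subset_iff,
    singleton_subset_iff, mem_insert, mem_singleton]
  refine ⟨⟨⟨hu, hv⟩, trivial⟩, ?_⟩
  rintro x (rfl | rfl) y (rfl | rfl) hxy
  · exact absurd rfl hxy
  · exact huv
  · rwa [norm_sub_rev]
  · exact absurd rfl hxy

theorem insert_mem_unitTriangles {X Y : Finset ℝ⁴} {s : Finset ℝ⁴} {q : ℝ⁴}
    (hs : s ∈ unitPairs Y) (hYX : Y ⊆ X) (hq : q ∈ X) (hqs : ∀ x ∈ s, ‖q - x‖ = 1) :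
    insert q s ∈ unitTriangles X := by
  simp only [unitPairs, mem_filter, mem_powersetCard] at hs
  obtain ⟨⟨hsY, hcard⟩, hunit⟩ := hs
  have hqs' : q ∉ s := fun h => by simpa using hqs q h
  simp only [unitTriangles, mem_filter, mem_powersetCard, insert_subset_iff,
    card_insert_of_notMem hqs', hcard]
  refine ⟨⟨⟨hq, hsY.trans hYX⟩, trivial⟩, ?_⟩
  intro x hx y hy hxy
  rcases mem_insert.1 hx with rfl | hxs <;> rcases mem_insert.1 hy with rfl | hys
  · exact absurd rfl hxy
  · exact hqs y hys
  · rw [norm_sub_rev]; exact hqs x hxs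
  · exact hunit x hxs y hys hxy

noncomputable def apexTriangles (P Q : Finset ℝ⁴) : Finset (Finset ℝ⁴) :=
  (unitPairs P ×ˢ Q).image fun x => insert x.2 x.1

theorem apexTriangles_subset {P Q : Finset ℝ⁴} (hPQ : ∀ p ∈ P, ∀ q ∈ Q, ‖p - q‖ = 1) :
    apexTriangles P Q ⊆ unitTriangles (P ∪ Q) := by
  intro t ht
  obtain ⟨⟨s, q⟩, hsq, rfl⟩ := mem_image.1 ht
  obtain ⟨hs, hq⟩ := mem_product.1 hsq
  have hsP : s ⊆ P := (mem_powersetCard.1 (mem_filter.1 hs).1).1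
  exact insert_mem_unitTriangles hs subset_union_left (mem_union_right _ hq)
    fun x hx => by rw [norm_sub_rev]; exact hPQ x (hsP hx) q hq

theorem insert_inter_of_disjoint {P Q s : Finset ℝ⁴} {q : ℝ⁴} (hPQ : Disjoint P Q) (hsP : s ⊆ P)
    (hq : q ∈ Q) : insert q s ∩ P = s ∧ insert q s ∩ Q = {q} := by
  constructor
  · rw [insert_inter_of_notMem (disjoint_right.1 hPQ hq), inter_eq_left.2 hsP]
  · rw [insert_inter_of_mem hq, disjoint_iff_inter_eq_empty.1 (hPQ.mono_left hsP),
      insert_empty]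

theorem card_apexTriangles {P Q : Finset ℝ⁴} (hPQ : Disjoint P Q) :
    #(apexTriangles P Q) = #(unitPairs P) * #Q := by
  rw [apexTriangles, card_image_of_injOn, card_product]
  rintro ⟨s, q⟩ hsq ⟨s', q'⟩ hsq' heq
  obtain ⟨hs, hq⟩ := mem_product.1 hsq
  obtain ⟨hs', hq'⟩ := mem_product.1 hsq'
  obtain ⟨h₁, h₂⟩ := insert_inter_of_disjoint hPQ (mem_powersetCard.1 (mem_filter.1 hs).1).1 hq
  obtain ⟨h₁', h₂'⟩ := insert_inter_of_disjoint hPQ (mem_powersetCard.1 (mem_filter.1 hs').1).1 hq'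
  simp only at heq
  rw [heq] at h₁ h₂
  exact Prod.ext (h₁.symm.trans h₁') (singleton_injective (h₂.symm.trans h₂'))

theorem disjoint_apexTriangles {P Q : Finset ℝ⁴} (hPQ : Disjoint P Q) :
    Disjoint (apexTriangles P Q) (apexTriangles Q P) := by
  rw [disjoint_left]
  intro t ht ht'
  obtain ⟨⟨s, q⟩, hsq, rfl⟩ := mem_image.1 ht
  obtain ⟨⟨s', p⟩, hsp, heq⟩ := mem_image.1 ht'
  simp only at heq
  obtain ⟨hs, hq⟩ := mem_product.1 hsq
  obtain ⟨hs', hp⟩ := mem_product.1 hsp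
  obtain ⟨hs'Q, hcard⟩ := mem_powersetCard.1 (mem_filter.1 hs').1
  have h₁ := (insert_inter_of_disjoint hPQ (mem_powersetCard.1 (mem_filter.1 hs).1).1 hq).2
  have h₂ := (insert_inter_of_disjoint hPQ.symm hs'Q hp).1
  rw [heq, h₁] at h₂
  have := congrArg card h₂
  simp only [card_singleton] at this hcard
  omega

theorem card_unitPairs_mul_add_le {P Q : Finset ℝ⁴} (hPQ : ∀ p ∈ P, ∀ q ∈ Q, ‖p - q‖ = 1) :
    #(unitPairs P) * #Q + #(unitPairs Q) * #P ≤ #(unitTriangles (P ∪ Q)) := by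
  have hQP : ∀ q ∈ Q, ∀ p ∈ P, ‖q - p‖ = 1 := fun q hq p hp => by
    rw [norm_sub_rev]; exact hPQ p hp q hq
  have hdisj : Disjoint P Q := disjoint_left.2 fun p hp hq => by simpa using hPQ p hp p hq
  rw [← card_apexTriangles hdisj, ← card_apexTriangles hdisj.symm,
    ← card_union_of_disjoint (disjoint_apexTriangles hdisj)]
  refine card_le_card (union_subset (apexTriangles_subset hPQ) ?_)
  rw [union_comm]
  exact apexTriangles_subset hQP

theorem norm_sub_le_one_of_mem_union {P Q : Finset ℝ⁴} (hP : ∀ x ∈ P, ∀ y ∈ P, ‖x - y‖ ≤ 1)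
    (hQ : ∀ x ∈ Q, ∀ y ∈ Q, ‖x - y‖ ≤ 1) (hPQ : ∀ p ∈ P, ∀ q ∈ Q, ‖p - q‖ = 1) :
    ∀ x ∈ P ∪ Q, ∀ y ∈ P ∪ Q, ‖x - y‖ ≤ 1 := by
  intro x hx y hy
  rcases mem_union.1 hx with hx | hx <;> rcases mem_union.1 hy with hy | hy
  · exact hP x hx y hy
  · exact (hPQ x hx y hy).le
  · rw [norm_sub_rev]; exact (hPQ y hy x hx).le
  · exact hQ x hx y hy

theorem injOn_pair_add {α : Type*} [DecidableEq α] {e : ℕ} (he : 1 ≤ e) {v : ℕ → α}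
    (hv : ∀ {k l}, v k = v l ↔ k ≡ l [MOD 2 * e + 1]) :
    Set.InjOn (fun k => ({v k, v (k + e)} : Finset α)) (range (2 * e + 1)) := by
  intro k hk l hl h
  simp only at h
  have hk : k < 2 * e + 1 := mem_range.1 hk
  have hl : l < 2 * e + 1 := mem_range.1 hl
  by_contra hkl
  have hk' : v k = v (l + e) := by
    rcases mem_insert.1 (h ▸ mem_insert_self (v k) {v (k + e)}) with h' | h'
    · exact absurd ((hv.1 h').eq_of_lt_of_lt hk hl) hkl
    · exact mem_singleton.1 h'
  have hl' : v l = v (k + e) := by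
    rcases mem_insert.1 (h.symm ▸ mem_insert_self (v l) {v (l + e)}) with h' | h'
    · exact absurd ((hv.1 h').eq_of_lt_of_lt hl hk) (Ne.symm hkl)
    · exact mem_singleton.1 h'
  -- the two congruences add up to `2 * e ≡ 0`
  have hsum : k + l + 0 ≡ k + l + 2 * e [MOD 2 * e + 1] := by
    have := (hv.1 hk').add (hv.1 hl')
    rwa [show l + e + (k + e) = k + l + 2 * e by ring] at this
  have hdvd := Nat.modEq_zero_iff_dvd.1 (Nat.ModEq.add_left_cancel' _ hsum).symm
  have := Nat.le_of_dvd (by omega) hdvd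
  omega

section Configuration

variable {e c : ℕ}

noncomputable def arcRadius (e : ℕ) : ℝ := √(1 - polygonRadius e ^ 2)

noncomputable def polygonPoint (e k : ℕ) : ℝ⁴ := toR4 (polygonVertex e k) 0

noncomputable def arcPoint (e c j : ℕ) : ℝ⁴ := toR4 0 (arcVertex (arcRadius e) c j)

noncomputable def polygon (e : ℕ) : Finset ℝ⁴ := (range (2 * e + 1)).image (polygonPoint e)

noncomputable def arc (e c : ℕ) : Finset ℝ⁴ := (range c).image (arcPoint e c)

theorem arcRadius_sq (he : 1 ≤ e) : arcRadius e ^ 2 = 1 - polygonRadius e ^ 2 :=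
  sq_sqrt (by linarith [polygonRadius_sq_le he])

theorem half_le_arcRadius (he : 1 ≤ e) : 1 / 2 ≤ arcRadius e := by
  rw [arcRadius, le_sqrt (by norm_num) (by linarith [polygonRadius_sq_le he])]
  linarith [polygonRadius_sq_le he]

theorem polygonPoint_eq_iff (he : 1 ≤ e) {k l : ℕ} :
    polygonPoint e k = polygonPoint e l ↔ k ≡ l [MOD 2 * e + 1] :=
  toR4_left_injective.eq_iff.trans (polygonVertex_eq_iff he)

theorem polygonPoint_mem (he : 1 ≤ e) (k : ℕ) : polygonPoint e k ∈ polygon e :=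
  mem_image.2 ⟨k % (2 * e + 1), mem_range.2 (Nat.mod_lt _ (by omega)),
    (polygonPoint_eq_iff he).2 (Nat.mod_modEq _ _)⟩

theorem card_polygon (he : 1 ≤ e) : #(polygon e) = 2 * e + 1 := by
  rw [polygon, card_image_of_injOn, card_range]
  intro k hk l hl h
  exact ((polygonPoint_eq_iff he).1 h).eq_of_lt_of_lt (mem_range.1 hk) (mem_range.1 hl)

theorem card_arc (he : 1 ≤ e) (hc : 2 ≤ c) : #(arc e c) = c := by
  rw [arc, card_image_of_injOn, card_range]
  exact toR4_right_injective.comp_injOn (arcVertex_injOn (half_le_arcRadius he) hc)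

theorem norm_sub_le_one_of_mem_polygon (he : 1 ≤ e) :
    ∀ x ∈ polygon e, ∀ y ∈ polygon e, ‖x - y‖ ≤ 1 := by
  simp only [polygon, mem_image, mem_range]
  rintro _ ⟨k, hk, rfl⟩ _ ⟨l, hl, rfl⟩
  rw [polygonPoint, polygonPoint, norm_toR4_sub_toR4_left]
  exact norm_polygonVertex_sub_le he hk hl

theorem norm_sub_le_one_of_mem_arc (he : 1 ≤ e) :
    ∀ x ∈ arc e c, ∀ y ∈ arc e c, ‖x - y‖ ≤ 1 := by
  simp only [arc, mem_image, mem_range]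
  rintro _ ⟨i, hi, rfl⟩ _ ⟨j, hj, rfl⟩
  rw [arcPoint, arcPoint, norm_toR4_sub_toR4_right]
  exact norm_arcVertex_sub_le (half_le_arcRadius he) hi hj

theorem norm_sub_eq_one_of_mem_polygon_of_mem_arc (he : 1 ≤ e) :
    ∀ p ∈ polygon e, ∀ q ∈ arc e c, ‖p - q‖ = 1 := by
  simp only [polygon, arc, mem_image, mem_range]
  rintro _ ⟨k, -, rfl⟩ _ ⟨j, -, rfl⟩
  apply norm_toR4_sub_toR4_eq_one
  rw [norm_polygonVertex, norm_arcVertex, sq_abs, sq_abs, arcRadius_sq he]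
  ring

theorem card_unitPairs_polygon (he : 1 ≤ e) : 2 * e + 1 ≤ #(unitPairs (polygon e)) := by
  have hsub : (range (2 * e + 1)).image (fun k => {polygonPoint e k, polygonPoint e (k + e)})
      ⊆ unitPairs (polygon e) := by
    simp only [subset_iff, mem_image]
    rintro _ ⟨k, -, rfl⟩
    refine pair_mem_unitPairs (polygonPoint_mem he k) (polygonPoint_mem he (k + e)) ?_
    rw [polygonPoint, polygonPoint, norm_toR4_sub_toR4_left, norm_sub_rev]
    exact norm_polygonVertex_add_sub he k
  calc 2 * e + 1 = #((range (2 * e + 1)).image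
        (fun k => {polygonPoint e k, polygonPoint e (k + e)})) := by
        rw [card_image_of_injOn (injOn_pair_add he (polygonPoint_eq_iff he)), card_range]
    _ ≤ _ := card_le_card hsub

theorem one_le_card_unitPairs_arc (he : 1 ≤ e) (hc : 2 ≤ c) : 1 ≤ #(unitPairs (arc e c)) := by
  have hmem : ∀ j < c, arcPoint e c j ∈ arc e c := fun j hj => mem_image_of_mem _ (mem_range.2 hj)
  refine card_pos.2 ⟨_, pair_mem_unitPairs (hmem (c - 1) (by omega)) (hmem 0 (by omega)) ?_⟩
  rw [arcPoint, arcPoint, norm_toR4_sub_toR4_right]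
  exact norm_arcVertex_last_sub_first (half_le_arcRadius he) hc

theorem exists_lenz_configuration (he : 1 ≤ e) (hc : 2 ≤ c) :
    ∃ X : Finset ℝ⁴, #X = 2 * e + 1 + c ∧ (∀ x ∈ X, ∀ y ∈ X, ‖x - y‖ ≤ 1) ∧
      (2 * e + 1) * (c + 1) ≤ #(unitTriangles X) := by
  have hPQ := norm_sub_eq_one_of_mem_polygon_of_mem_arc (c := c) he
  have hdisj : Disjoint (polygon e) (arc e c) :=
    disjoint_left.2 fun p hp hq => by simpa using hPQ p hp p hq
  refine ⟨polygon e ∪ arc e c, ?_, norm_sub_le_one_of_mem_union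
    (norm_sub_le_one_of_mem_polygon he) (norm_sub_le_one_of_mem_arc he) hPQ, ?_⟩
  · rw [card_union_of_disjoint hdisj, card_polygon he, card_arc he hc]
  · have hcount := card_unitPairs_mul_add_le hPQ
    rw [card_polygon he, card_arc he hc] at hcount
    have h1 := Nat.mul_le_mul_right c (card_unitPairs_polygon he)
    have h2 := Nat.mul_le_mul_right (2 * e + 1) (one_le_card_unitPairs_arc he hc)
    linarith

end Configuration

theorem exists_lenz_parameters {n a : ℕ} (hn : 5 ≤ n) (han : a ≤ n - 2) :
    ∃ e c, 1 ≤ e ∧ 2 ≤ c ∧ 2 * e + 1 + c = n ∧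
      n + 2 * (n - a) * ((a - 1) / 2) ≤ (2 * e + 1) * (c + 1) := by
  obtain hd | hd := Nat.eq_zero_or_pos ((a - 1) / 2)
  · exact ⟨1, n - 3, le_rfl, by omega, by omega, by rw [hd]; omega⟩
  · set d := (a - 1) / 2
    obtain ⟨t, ht⟩ : ∃ t, a = 2 * d + 1 + t := ⟨a - (2 * d + 1), by omega⟩
    obtain ⟨m, hm⟩ : ∃ m, n = a + m := ⟨n - a, by omega⟩
    refine ⟨d, t + m, hd, by omega, by omega, ?_⟩
    rw [show n - a = m by omega, hm, ht]
    nlinarith [Nat.zero_le (d * t)]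

theorem lenz_configuration_many_triangles_general (n a : ℕ) (hn : n ≥ 5)
    (han : a ≤ n - 2) :
    ∃ X : Finset (EuclideanSpace ℝ (Fin 4)), X.card = n ∧
      (∀ x ∈ X, ∀ y ∈ X, ‖x - y‖ ≤ 1) ∧
      (unitTriangles X).card ≥ n + 2 * (n - a) * ((a - 1) / 2) := by
  obtain ⟨e, c, he, hc, rfl, hcount⟩ := exists_lenz_parameters hn han
  obtain ⟨X, hcard, hdiam, htri⟩ := exists_lenz_configuration he hc
  exact ⟨X, hcard, hdiam, hcount.trans htri⟩

theorem lenz_configuration_many_triangles (n a : ℕ) (hn : n ≥ 5)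
    (ha₂ : 2 ≤ a) (han : a ≤ n - 2) :
    ∃ X : Finset (EuclideanSpace ℝ (Fin 4)), X.card = n ∧
      (∀ x ∈ X, ∀ y ∈ X, ‖x - y‖ ≤ 1) ∧
      (unitTriangles X).card ≥ n + 2 * (n - a) * ((a - 1) / 2) :=
  lenz_configuration_many_triangles_general n a hn han
end
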